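/- arXiv:2408.16898 — 9 statements merged into one kernel-verified Lean document; each statement's English description precedes it below -/
import Mathlib

section
/- Let Θ be a Polish space and f : Θ → ℝ a bounded measurable function. If f is not continuous at some point, then there exists a nonempty set Π of Borel probability measures on Θ, a sequence (π_n) of probability measures converging weakly to a measure in the weak closure of Π, and a constant α > 0 such that ∫ f dπ_n ≤ inf_{π ∈ Π} ∫ f dπ − α for all n. -/
open MeasureTheory Filter Topology

noncomputable def diracPM {Θ : Type*} [MeasurableSpace Θ] (θ : Θ) : ProbabilityMeasure Θ :=
  ⟨Measure.dirac θ, inferInstance⟩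

lemma dirac_tendsto {Θ : Type*} [TopologicalSpace Θ] [MeasurableSpace Θ] [OpensMeasurableSpace Θ]
    {u : ℕ → Θ} {θ : Θ} (h : Tendsto u atTop (𝓝 θ)) :
    Tendsto (fun n => diracPM (u n)) atTop (𝓝 (diracPM θ)) := by
  rw [ProbabilityMeasure.tendsto_iff_forall_integral_tendsto]
  intro g
  have hg : ∀ x : Θ, ∫ ω, g ω ∂((diracPM x : ProbabilityMeasure Θ) : Measure Θ) = g x := by
    intro x
    exact integral_dirac' _ _ g.continuous.stronglyMeasurable
  simp only [hg]
  exact (g.continuous.tendsto θ).comp h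

/-- If the bounded measurable value function `f` is discontinuous at some point,
then there is an ambiguity set over which the payoff guarantee of `f` is not robust. -/
theorem stmt2 {Θ : Type*} [TopologicalSpace Θ] [PolishSpace Θ] [MeasurableSpace Θ] [BorelSpace Θ]
    (f : Θ → ℝ) (M : ℝ) (hfb : ∀ θ, |f θ| ≤ M) (hfm : Measurable f)
    (hf : ∃ θ : Θ, ¬ ContinuousAt f θ) :
    ∃ (P : Set (ProbabilityMeasure Θ)) (πs : ℕ → ProbabilityMeasure Θ)
      (π : ProbabilityMeasure Θ) (α : ℝ),
      P.Nonempty ∧ π ∈ closure P ∧ Tendsto πs atTop (𝓝 π) ∧ 0 < α ∧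
      ∀ n, ∫ θ, f θ ∂(πs n : Measure Θ)
        ≤ sInf ((fun π' : ProbabilityMeasure Θ => ∫ θ, f θ ∂(π' : Measure Θ)) '' P) - α := by
  obtain ⟨θ₀, hθ₀⟩ := hf
  have hdint : ∀ x : Θ, ∫ θ, f θ ∂((diracPM x : ProbabilityMeasure Θ) : Measure Θ) = f x := by
    intro x
    exact integral_dirac' _ _ hfm.stronglyMeasurable
  -- get a sequence witnessing discontinuity
  rw [ContinuousAt, tendsto_iff_seq_tendsto] at hθ₀
  push_neg at hθ₀
  obtain ⟨u, hu, hfu⟩ := hθ₀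
  rw [Metric.tendsto_atTop] at hfu
  push_neg at hfu
  obtain ⟨ε, hε, hfreq⟩ := hfu
  have hfreq' : ∃ᶠ n in atTop, ε ≤ dist (f (u n)) (f θ₀) := by
    rw [frequently_atTop]
    intro a; obtain ⟨n, hn, h⟩ := hfreq a; exact ⟨n, hn, h⟩
  have hsplit : (∃ᶠ n in atTop, f (u n) ≤ f θ₀ - ε) ∨ (∃ᶠ n in atTop, f θ₀ + ε ≤ f (u n)) := by
    rw [← frequently_or_distrib]
    refine hfreq'.mono fun n hn => ?_
    rw [Real.dist_eq] at hn
    rcases le_abs.mp hn with h | h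
    · right; linarith
    · left; linarith
  rcases hsplit with hlow | hhigh
  · -- lower semicontinuity fails: Π = {δ θ₀}, πs = δ (u ∘ φ)
    obtain ⟨φ, hφ, hφP⟩ := extraction_of_frequently_atTop hlow
    refine ⟨{diracPM θ₀}, fun n => diracPM (u (φ n)), diracPM θ₀, ε, Set.singleton_nonempty _,
      subset_closure rfl, dirac_tendsto (hu.comp hφ.tendsto_atTop), hε, fun n => ?_⟩
    rw [hdint, Set.image_singleton, csInf_singleton, hdint]
    exact hφP n
  · -- upper semicontinuity fails: Π = {δ (u (φ n))}, πs constant δ θ₀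
    obtain ⟨φ, hφ, hφP⟩ := extraction_of_frequently_atTop hhigh
    refine ⟨Set.range (fun n => diracPM (u (φ n))), fun _ => diracPM θ₀, diracPM θ₀, ε,
      Set.range_nonempty _, ?_, tendsto_const_nhds, hε, fun n => ?_⟩
    · exact mem_closure_of_tendsto (dirac_tendsto (hu.comp hφ.tendsto_atTop))
        (Eventually.of_forall fun n => Set.mem_range_self n)
    · rw [hdint]
      have : f θ₀ + ε ≤ sInf ((fun π' : ProbabilityMeasure Θ =>
          ∫ θ, f θ ∂(π' : Measure Θ)) '' Set.range (fun n => diracPM (u (φ n)))) := by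
        apply le_csInf
        · exact (Set.range_nonempty _).image _
        · rintro b ⟨π', ⟨m, rfl⟩, rfl⟩
          simpa only [hdint] using hφP m
      linarith
end

section
/- Let Θ be a Polish space, f : Θ → ℝ bounded and measurable, and let lsc f denote the lower semicontinuous envelope of f. Then for every Borel probability measure π on Θ there exists a sequence (π_n) of Borel probability measures converging weakly to π such that liminf_n ∫ f dπ_n ≤ ∫ (lsc f) dπ. -/
open MeasureTheory Filter Topology

/-- The lower semicontinuous envelope of `f`: the pointwise supremum of all lower
semicontinuous functions lying below `f`. -/
noncomputable def lscEnv {Θ : Type*} [TopologicalSpace Θ] (f : Θ → ℝ) : Θ → ℝ :=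
  fun θ => ⨆ g : {g : Θ → ℝ // LowerSemicontinuous g ∧ ∀ x, g x ≤ f x}, g.1 θ

section aux

variable {Θ : Type*} [TopologicalSpace Θ] {f : Θ → ℝ} {M : ℝ}

lemma lscEnv_bddAbove (hM2 : ∀ θ, f θ ≤ M) (θ : Θ) :
    BddAbove (Set.range fun g : {g : Θ → ℝ // LowerSemicontinuous g ∧ ∀ x, g x ≤ f x} => g.1 θ) := by
  refine ⟨M, ?_⟩
  rintro y ⟨g, rfl⟩
  exact (g.2.2 θ).trans (hM2 θ)

lemma lscEnv_le_self (hM2 : ∀ θ, f θ ≤ M) (hM1 : ∀ θ, -M ≤ f θ) (θ : Θ) :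
    lscEnv f θ ≤ f θ := by
  have : Nonempty {g : Θ → ℝ // LowerSemicontinuous g ∧ ∀ x, g x ≤ f x} :=
    ⟨⟨fun _ => -M, lowerSemicontinuous_const, fun x => hM1 x⟩⟩
  exact ciSup_le fun g => g.2.2 θ

lemma neg_le_lscEnv (hM2 : ∀ θ, f θ ≤ M) (hM1 : ∀ θ, -M ≤ f θ) (θ : Θ) :
    -M ≤ lscEnv f θ :=
  le_ciSup (lscEnv_bddAbove hM2 θ)
    (⟨fun _ => -M, lowerSemicontinuous_const, fun x => hM1 x⟩ :
      {g : Θ → ℝ // LowerSemicontinuous g ∧ ∀ x, g x ≤ f x})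

lemma lscEnv_lsc (hM2 : ∀ θ, f θ ≤ M) : LowerSemicontinuous (lscEnv f) :=
  lowerSemicontinuous_ciSup (fun x => lscEnv_bddAbove hM2 x) fun g => g.2.1

end aux

/-- Near any point one can find points where `f` is almost below the lsc envelope value. -/
lemma exists_near_lt_lscEnv {Θ : Type*} [MetricSpace Θ] {f : Θ → ℝ} {M : ℝ}
    (hM2 : ∀ θ, f θ ≤ M) (hM1 : ∀ θ, -M ≤ f θ) (y : Θ) {ε δ : ℝ} (hε : 0 < ε) (hδ : 0 < δ) :
    ∃ x, dist x y < δ ∧ f x < lscEnv f y + ε := by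
  by_contra h
  push_neg at h
  -- h : ∀ x, dist x y < δ → lscEnv f y + ε ≤ f x
  set c : ℝ := lscEnv f y + ε with hc
  have hcM : 0 ≤ c + M := by
    have := neg_le_lscEnv hM2 hM1 y
    linarith
  set g : Θ → ℝ := fun x => -M + Set.indicator (Metric.ball y δ) (fun _ => c + M) x with hgdef
  have hg : LowerSemicontinuous g :=
    lowerSemicontinuous_const.add (Metric.isOpen_ball.lowerSemicontinuous_indicator hcM)
  have hgle : ∀ x, g x ≤ f x := by
    intro x
    by_cases hx : x ∈ Metric.ball y δ
    · have := h x (by simpa [Metric.mem_ball] using hx)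
      simp only [hgdef, Set.indicator_of_mem hx]
      linarith
    · simp only [hgdef, Set.indicator_of_notMem hx, add_zero]
      exact hM1 x
  have hgy : g y = c := by
    simp only [hgdef, Set.indicator_of_mem (Metric.mem_ball_self hδ)]
    ring
  have : g y ≤ lscEnv f y :=
    le_ciSup (lscEnv_bddAbove hM2 y)
      (⟨g, hg, hgle⟩ : {g : Θ → ℝ // LowerSemicontinuous g ∧ ∀ x, g x ≤ f x})
  rw [hgy, hc] at this
  linarith

/-- For every prior `π` there is a sequence of priors converging weakly to `π`
whose expected payoffs have liminf at most the expectation of the lsc envelope of `f`. -/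
theorem stmt4 {Θ : Type*} [TopologicalSpace Θ] [PolishSpace Θ] [MeasurableSpace Θ] [BorelSpace Θ]
    (f : Θ → ℝ) (M : ℝ) (hfb : ∀ θ, |f θ| ≤ M) (hfm : Measurable f)
    (π : ProbabilityMeasure Θ) :
    ∃ πs : ℕ → ProbabilityMeasure Θ,
      Tendsto πs atTop (𝓝 π) ∧
      liminf (fun n => ∫ θ, f θ ∂(πs n : Measure Θ)) atTop
        ≤ ∫ θ, lscEnv f θ ∂(π : Measure Θ) := by
  letI := TopologicalSpace.upgradeIsCompletelyMetrizable Θ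
  have hM1 : ∀ θ, -M ≤ f θ := fun θ => neg_le_of_abs_le (hfb θ)
  have hM2 : ∀ θ, f θ ≤ M := fun θ => le_of_abs_le (hfb θ)
  have hne : Nonempty Θ := MeasureTheory.Measure.nonempty_of_neZero (π : Measure Θ)
  obtain ⟨s, hs⟩ := TopologicalSpace.exists_dense_seq Θ
  -- the mesh sizes
  set ε : ℕ → ℝ := fun n => 1 / (n + 1) with hεdef
  have hε : ∀ n, 0 < ε n := fun n => by positivity
  -- the index map
  have hex : ∀ n θ, ∃ k, dist θ (s k) < ε n := fun n θ => hs.exists_dist_lt θ (hε n)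
  set ind : ℕ → Θ → ℕ := fun n θ => Nat.find (hex n θ) with hinddef
  have hind_spec : ∀ n θ, dist θ (s (ind n θ)) < ε n := fun n θ => Nat.find_spec (hex n θ)
  have hind_meas : ∀ n, Measurable (ind n) := by
    intro n
    apply measurable_to_countable'
    intro k
    have : ind n ⁻¹' {k} =
        Metric.ball (s k) (ε n) ∩ ⋂ j ∈ Set.Iio k, (Metric.ball (s j) (ε n))ᶜ := by
      ext θ
      simp only [Set.mem_preimage, Set.mem_singleton_iff, hinddef, Nat.find_eq_iff,
        Set.mem_inter_iff, Metric.mem_ball, Set.mem_iInter, Set.mem_compl_iff, Set.mem_Iio,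
        dist_comm]
    rw [this]
    exact measurableSet_ball.inter
      (MeasurableSet.biInter (Set.to_countable _) fun j _ => measurableSet_ball.compl)
  -- choose good points in each cell
  have hpoint : ∀ n k, ∃ x : Θ,
      (∀ θ, ind n θ = k → f x ≤ lscEnv f θ + 3 * ε n) ∧
      (∀ θ, ind n θ = k → dist x θ < 3 * ε n) := by
    intro n k
    by_cases hA : ∃ θ, ind n θ = k
    · obtain ⟨θ₀, hθ₀⟩ := hA
      set S : Set ℝ := lscEnv f '' {θ | ind n θ = k} with hSdef
      have hSne : S.Nonempty := ⟨lscEnv f θ₀, θ₀, hθ₀, rfl⟩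
      obtain ⟨a, ⟨y, hy, rfl⟩, hay⟩ := Real.lt_sInf_add_pos hSne (hε n)
      obtain ⟨x, hxy, hxf⟩ := exists_near_lt_lscEnv hM2 hM1 y (hε n) (hε n)
      have hSbdd : BddBelow S := by
        refine ⟨-M, ?_⟩
        rintro a ⟨θ, _, rfl⟩
        exact neg_le_lscEnv hM2 hM1 θ
      refine ⟨x, ?_, ?_⟩
      · intro θ hθ
        have h1 : sInf S ≤ lscEnv f θ := csInf_le hSbdd ⟨θ, hθ, rfl⟩
        have hεn := hε n
        linarith
      · intro θ hθ
        have d1 : dist y (s k) < ε n := by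
          have := hind_spec n y; rwa [hy] at this
        have d2 : dist θ (s k) < ε n := by
          have := hind_spec n θ; rwa [hθ] at this
        calc dist x θ ≤ dist x y + dist y (s k) + dist (s k) θ := dist_triangle4 x y (s k) θ
          _ < ε n + ε n + ε n := by rw [dist_comm (s k) θ]; linarith
          _ = 3 * ε n := by ring
    · push_neg at hA
      exact ⟨Classical.arbitrary Θ, fun θ hθ => absurd hθ (hA θ), fun θ hθ => absurd hθ (hA θ)⟩
  choose x hx1 hx2 using hpoint
  set T : ℕ → Θ → Θ := fun n θ => x n (ind n θ) with hTdef
  have hT_meas : ∀ n, Measurable (T n) := fun n =>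
    (measurable_from_top (f := x n)).comp (hind_meas n)
  have hT_f : ∀ n θ, f (T n θ) ≤ lscEnv f θ + 3 * ε n := fun n θ => hx1 n (ind n θ) θ rfl
  have hT_dist : ∀ n θ, dist (T n θ) θ < 3 * ε n := fun n θ => hx2 n (ind n θ) θ rfl
  -- the approximating measures
  refine ⟨fun n => π.map (hT_meas n).aemeasurable, ?_, ?_⟩
  · -- weak convergence
    rw [ProbabilityMeasure.tendsto_iff_forall_integral_tendsto]
    intro g
    have key : ∀ n, ∫ ω, g ω ∂((π.map (hT_meas n).aemeasurable : ProbabilityMeasure Θ) : Measure Θ)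
        = ∫ θ, g (T n θ) ∂(π : Measure Θ) := by
      intro n
      rw [ProbabilityMeasure.toMeasure_map]
      exact integral_map (hT_meas n).aemeasurable g.continuous.measurable.aestronglyMeasurable
    simp only [key]
    apply tendsto_integral_of_dominated_convergence (fun _ => ‖g‖)
    · exact fun n => (g.continuous.measurable.comp (hT_meas n)).aestronglyMeasurable
    · exact integrable_const _
    · exact fun n => Filter.Eventually.of_forall fun θ => g.norm_coe_le_norm _
    · refine Filter.Eventually.of_forall fun θ => ?_
      have hTθ : Tendsto (fun n => T n θ) atTop (𝓝 θ) := by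
        rw [tendsto_iff_dist_tendsto_zero]
        have h0 : Tendsto (fun n : ℕ => 3 * ε n) atTop (𝓝 0) := by
          have := tendsto_one_div_add_atTop_nhds_zero_nat (𝕜 := ℝ)
          simpa [hεdef] using (this.const_mul 3).congr (fun n => by push_cast; ring)
        exact squeeze_zero (fun n => dist_nonneg) (fun n => (hT_dist n θ).le) h0
      exact ((g.continuous.tendsto θ).comp hTθ)
  · -- liminf bound
    have hlsc_meas : Measurable (lscEnv f) := (lscEnv_lsc hM2).measurable
    have hlsc_bdd : ∀ θ, |lscEnv f θ| ≤ M := fun θ =>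
      abs_le.2 ⟨neg_le_lscEnv hM2 hM1 θ, (lscEnv_le_self hM2 hM1 θ).trans (hM2 θ)⟩
    have hinteg : ∀ (g : Θ → ℝ), Measurable g → (∀ θ, |g θ| ≤ M) →
        Integrable g (π : Measure Θ) := fun g hg hb =>
      ⟨hg.aestronglyMeasurable,
        HasFiniteIntegral.of_bounded (C := M) (Filter.Eventually.of_forall fun θ => hb θ)⟩
    have hle : ∀ n, ∫ θ, f θ ∂((π.map (hT_meas n).aemeasurable : ProbabilityMeasure Θ) : Measure Θ)
        ≤ ∫ θ, lscEnv f θ ∂(π : Measure Θ) + 3 * ε n := by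
      intro n
      rw [ProbabilityMeasure.toMeasure_map,
        integral_map (hT_meas n).aemeasurable hfm.aestronglyMeasurable]
      have h1 : Integrable (fun θ => f (T n θ)) (π : Measure Θ) :=
        hinteg _ (hfm.comp (hT_meas n)) fun θ => hfb _
      have h2 : Integrable (fun θ => lscEnv f θ + 3 * ε n) (π : Measure Θ) :=
        (hinteg _ hlsc_meas hlsc_bdd).add (integrable_const _)
      calc ∫ θ, f (T n θ) ∂(π : Measure Θ)
          ≤ ∫ θ, (lscEnv f θ + 3 * ε n) ∂(π : Measure Θ) :=
            integral_mono h1 h2 fun θ => hT_f n θ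
        _ = ∫ θ, lscEnv f θ ∂(π : Measure Θ) + 3 * ε n := by
            rw [integral_add (hinteg _ hlsc_meas hlsc_bdd) (integrable_const _)]
            simp
    have htend : Tendsto (fun n => ∫ θ, lscEnv f θ ∂(π : Measure Θ) + 3 * ε n) atTop
        (𝓝 (∫ θ, lscEnv f θ ∂(π : Measure Θ))) := by
      have h0 : Tendsto (fun n : ℕ => 3 * ε n) atTop (𝓝 0) := by
        have := tendsto_one_div_add_atTop_nhds_zero_nat (𝕜 := ℝ)
        simpa [hεdef] using (this.const_mul 3).congr (fun n => by push_cast; ring)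
      simpa using (tendsto_const_nhds.add h0)
    have hlimb := htend.liminf_eq
    rw [← hlimb]
    have hbd : IsBoundedUnder (· ≥ ·) atTop (fun n =>
        ∫ θ, f θ ∂((π.map (hT_meas n).aemeasurable : ProbabilityMeasure Θ) : Measure Θ)) := by
      refine isBoundedUnder_of ⟨-M, fun n => ?_⟩
      have hnorm := norm_integral_le_of_norm_le_const
        (μ := ((π.map (hT_meas n).aemeasurable : ProbabilityMeasure Θ) : Measure Θ)) (C := M)
        (Filter.Eventually.of_forall fun θ => by rw [Real.norm_eq_abs]; exact hfb θ)
      simp only [measure_univ, ENNReal.toReal_one, probReal_univ, mul_one, Real.norm_eq_abs] at hnorm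
      exact neg_le_of_abs_le hnorm
    exact liminf_le_liminf (Filter.Eventually.of_forall hle) hbd htend.isCoboundedUnder_ge
end

section
/- Let Θ be a Polish space and D a metric on the space of Borel probability measures on Θ that metrizes the weak topology and is jointly convex as a function on pairs of measures. Let C be a nonempty set of probability measures and r > 0, and let Π = { π : inf_{π' ∈ C} D(π, π') ≤ r } be the radius-r neighborhood of C. Then Π is rich: for every sequence (π_n) converging weakly to a measure in the weak closure of Π, there exists a sequence (π_n') in Π with ‖π_n' − π_n‖_TV → 0. -/
open MeasureTheory Filter Topology

/-- Convex combination `l•μ + (1-l)•ν` of two probability measures. -/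
noncomputable def mix {Θ : Type*} [MeasurableSpace Θ] (l : ℝ) (hl0 : 0 ≤ l) (hl1 : l ≤ 1)
    (μ ν : ProbabilityMeasure Θ) : ProbabilityMeasure Θ :=
  ⟨ENNReal.ofReal l • (μ : Measure Θ) + ENNReal.ofReal (1 - l) • (ν : Measure Θ), by
    constructor
    simp only [Measure.coe_add, Measure.coe_smul, Pi.add_apply, Pi.smul_apply,
      measure_univ, smul_eq_mul, mul_one]
    rw [← ENNReal.ofReal_add hl0 (by linarith), add_sub_cancel, ENNReal.ofReal_one]⟩

/-- Dirac measure as a probability measure. -/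
noncomputable def diracP {Θ : Type*} [MeasurableSpace Θ] (θ : Θ) : ProbabilityMeasure Θ :=
  ⟨Measure.dirac θ, inferInstance⟩

/-- Total variation distance between probability measures. -/
noncomputable def tvDist {Θ : Type*} [MeasurableSpace Θ]
    (μ ν : ProbabilityMeasure Θ) : ℝ :=
  ⨆ A : {A : Set Θ // MeasurableSet A},
    |((μ : Measure Θ) A.1).toReal - ((ν : Measure Θ) A.1).toReal|

lemma mix_self {Θ : Type*} [MeasurableSpace Θ] (l : ℝ) (hl0 : 0 ≤ l) (hl1 : l ≤ 1)
    (μ : ProbabilityMeasure Θ) : mix l hl0 hl1 μ μ = μ := by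
  apply Subtype.ext
  show ENNReal.ofReal l • (μ : Measure Θ) + ENNReal.ofReal (1 - l) • (μ : Measure Θ) = μ
  rw [← add_smul, ← ENNReal.ofReal_add hl0 (by linarith), add_sub_cancel,
    ENNReal.ofReal_one, one_smul]

lemma mix_apply {Θ : Type*} [MeasurableSpace Θ] (l : ℝ) (hl0 : 0 ≤ l) (hl1 : l ≤ 1)
    (μ ν : ProbabilityMeasure Θ) (A : Set Θ) :
    ((mix l hl0 hl1 μ ν : ProbabilityMeasure Θ) : Measure Θ) A
      = ENNReal.ofReal l * (μ : Measure Θ) A + ENNReal.ofReal (1 - l) * (ν : Measure Θ) A := by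
  simp [mix]

lemma toReal_le_one {Θ : Type*} [MeasurableSpace Θ] (μ : ProbabilityMeasure Θ) (A : Set Θ) :
    ((μ : Measure Θ) A).toReal ≤ 1 := by
  have h := prob_le_one (μ := (μ : Measure Θ)) (s := A)
  have := ENNReal.toReal_mono (by norm_num) h
  simpa using this

lemma tvDist_nonneg {Θ : Type*} [MeasurableSpace Θ] (μ ν : ProbabilityMeasure Θ) :
    0 ≤ tvDist μ ν := by
  have hbdd : BddAbove (Set.range fun A : {A : Set Θ // MeasurableSet A} =>
      |((μ : Measure Θ) A.1).toReal - ((ν : Measure Θ) A.1).toReal|) := by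
    refine ⟨2, ?_⟩
    rintro x ⟨A, rfl⟩
    have h1 := toReal_le_one μ A.1
    have h2 := toReal_le_one ν A.1
    have h3 : 0 ≤ ((μ : Measure Θ) A.1).toReal := ENNReal.toReal_nonneg
    have h4 : 0 ≤ ((ν : Measure Θ) A.1).toReal := ENNReal.toReal_nonneg
    rw [abs_le]; constructor <;> linarith
  have := le_ciSup hbdd ⟨∅, MeasurableSet.empty⟩
  exact le_trans (abs_nonneg _) this

lemma tv_mix_le {Θ : Type*} [MeasurableSpace Θ] (l : ℝ) (hl0 : 0 ≤ l) (hl1 : l ≤ 1)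
    (ζ π : ProbabilityMeasure Θ) : tvDist (mix l hl0 hl1 ζ π) π ≤ l := by
  apply Real.iSup_le _ hl0
  intro A
  rw [mix_apply]
  have hfin1 : ENNReal.ofReal l * (ζ : Measure Θ) A.1 ≠ ⊤ :=
    ENNReal.mul_ne_top ENNReal.ofReal_ne_top (measure_ne_top _ _)
  have hfin2 : ENNReal.ofReal (1 - l) * (π : Measure Θ) A.1 ≠ ⊤ :=
    ENNReal.mul_ne_top ENNReal.ofReal_ne_top (measure_ne_top _ _)
  rw [ENNReal.toReal_add hfin1 hfin2, ENNReal.toReal_mul, ENNReal.toReal_mul,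
    ENNReal.toReal_ofReal hl0, ENNReal.toReal_ofReal (by linarith)]
  set a := ((ζ : Measure Θ) A.1).toReal
  set b := ((π : Measure Θ) A.1).toReal
  have h1 : a ≤ 1 := toReal_le_one ζ A.1
  have h2 : b ≤ 1 := toReal_le_one π A.1
  have h3 : 0 ≤ a := ENNReal.toReal_nonneg
  have h4 : 0 ≤ b := ENNReal.toReal_nonneg
  have : l * a + (1 - l) * b - b = l * (a - b) := by ring
  rw [this, abs_mul, abs_of_nonneg hl0]
  calc l * |a - b| ≤ l * 1 := by
        apply mul_le_mul_of_nonneg_left _ hl0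
        rw [abs_le]; constructor <;> linarith
    _ = l := mul_one l

lemma alpha_key (d r : ℝ) (hd : 0 ≤ d) (hr : 0 < r) :
    (1 - min (max (d - r) 0 / r) 1) * d ≤ r := by
  rcases le_total (d - r) 0 with h | h
  · rw [max_eq_right h]
    simp only [zero_div]
    have : min (0:ℝ) 1 = 0 := by norm_num
    rw [this]; linarith
  · rw [max_eq_left h]
    rcases le_total ((d - r) / r) 1 with h2 | h2
    · rw [min_eq_left h2]
      have h3 : (1 - (d - r) / r) = (2 * r - d) / r := by field_simp; ring
      rw [h3, div_mul_eq_mul_div, div_le_iff₀ hr]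
      nlinarith [sq_nonneg (d - r)]
    · rw [min_eq_right h2]; simp; linarith

/-- Radius-`r` neighborhoods, with respect to a jointly convex metric `D`
metrizing the weak topology, are rich ambiguity sets. -/
theorem stmt8 {Θ : Type*} [TopologicalSpace Θ] [PolishSpace Θ] [MeasurableSpace Θ] [BorelSpace Θ]
    (D : ProbabilityMeasure Θ → ProbabilityMeasure Θ → ℝ)
    (hD0 : ∀ μ ν, 0 ≤ D μ ν) (hDsymm : ∀ μ ν, D μ ν = D ν μ)
    (hDtri : ∀ μ ν ρ, D μ ρ ≤ D μ ν + D ν ρ)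
    (hDeq : ∀ μ ν, D μ ν = 0 ↔ μ = ν)
    (hDweak : ∀ (πs : ℕ → ProbabilityMeasure Θ) (π : ProbabilityMeasure Θ),
      Tendsto πs atTop (𝓝 π) ↔ Tendsto (fun n => D (πs n) π) atTop (𝓝 0))
    (hDconv : ∀ (l : ℝ) (hl0 : 0 ≤ l) (hl1 : l ≤ 1) (μ₁ μ₂ ν₁ ν₂ : ProbabilityMeasure Θ),
      D (mix l hl0 hl1 μ₁ μ₂) (mix l hl0 hl1 ν₁ ν₂) ≤ l * D μ₁ ν₁ + (1 - l) * D μ₂ ν₂)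
    (C : Set (ProbabilityMeasure Θ)) (hC : C.Nonempty) (r : ℝ) (hr : 0 < r) :
    ∀ (πs : ℕ → ProbabilityMeasure Θ) (π : ProbabilityMeasure Θ),
      π ∈ closure {ρ : ProbabilityMeasure Θ | sInf ((fun ζ => D ρ ζ) '' C) ≤ r} →
      Tendsto πs atTop (𝓝 π) →
      ∃ πs' : ℕ → ProbabilityMeasure Θ,
        (∀ n, πs' n ∈ {ρ : ProbabilityMeasure Θ | sInf ((fun ζ => D ρ ζ) '' C) ≤ r}) ∧
        Tendsto (fun n => tvDist (πs' n) (πs n)) atTop (𝓝 0) := by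
  intro πs π hπcl hconv
  -- basic facts about the infimum
  have hbdd : ∀ ρ : ProbabilityMeasure Θ, BddBelow ((fun ζ => D ρ ζ) '' C) := by
    intro ρ; exact ⟨0, by rintro x ⟨ζ, -, rfl⟩; exact hD0 ρ ζ⟩
  have hne : ∀ ρ : ProbabilityMeasure Θ, ((fun ζ => D ρ ζ) '' C).Nonempty :=
    fun ρ => hC.image _
  have hS_le : ∀ (ρ ζ : ProbabilityMeasure Θ), ζ ∈ C →
      sInf ((fun ζ => D ρ ζ) '' C) ≤ D ρ ζ := by
    intro ρ ζ hζ; exact csInf_le (hbdd ρ) ⟨ζ, hζ, rfl⟩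
  have hS_lip : ∀ ρ σ : ProbabilityMeasure Θ,
      sInf ((fun ζ => D ρ ζ) '' C) ≤ D ρ σ + sInf ((fun ζ => D σ ζ) '' C) := by
    intro ρ σ
    have key : sInf ((fun ζ => D ρ ζ) '' C) - D ρ σ ≤ sInf ((fun ζ => D σ ζ) '' C) := by
      apply le_csInf (hne σ)
      rintro x ⟨ζ, hζ, rfl⟩
      have h1 := hDtri ρ σ ζ
      have h2 := hS_le ρ ζ hζ
      linarith
    linarith
  -- π itself belongs to the set
  obtain ⟨ρk, hρkP, hρk⟩ := mem_closure_iff_seq_limit.mp hπcl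
  have hSπ : sInf ((fun ζ => D π ζ) '' C) ≤ r := by
    have hd : Tendsto (fun k => D (ρk k) π) atTop (𝓝 0) := (hDweak ρk π).mp hρk
    have hlim : Tendsto (fun k => D π (ρk k) + r) atTop (𝓝 r) := by
      have : Tendsto (fun k => D π (ρk k)) atTop (𝓝 0) := by
        simpa [hDsymm] using hd
      simpa using this.add tendsto_const_nhds
    refine ge_of_tendsto hlim (Eventually.of_forall fun k => ?_)
    have h1 := hS_lip π (ρk k); have h2 := hρkP k; simp only [Set.mem_setOf_eq] at h2; linarith
  -- distances to the limit
  set ε : ℕ → ℝ := fun n => D (πs n) π with hεdef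
  have hε0 : ∀ n, 0 ≤ ε n := fun n => hD0 _ _
  have hεlim : Tendsto ε atTop (𝓝 0) := (hDweak πs π).mp hconv
  -- choose near-minimizers ζ n ∈ C
  have hchoose : ∀ n : ℕ, ∃ ζ ∈ C, D (πs n) ζ < r + (2 * ε n + 1 / (n + 1)) := by
    intro n
    have hpos : (0:ℝ) < ε n + 1 / (n + 1) := by
      have h1 : (0:ℝ) < 1 / ((n:ℝ) + 1) := by positivity
      have h2 := hε0 n
      linarith
    obtain ⟨x, ⟨ζ, hζC, rfl⟩, hx⟩ := Real.lt_sInf_add_pos (hne (πs n)) hpos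
    refine ⟨ζ, hζC, ?_⟩
    have h1 := hS_lip (πs n) π
    linarith
  choose ζ hζC hζlt using hchoose
  set d : ℕ → ℝ := fun n => D (πs n) (ζ n) with hddef
  set δ : ℕ → ℝ := fun n => 2 * ε n + 1 / (n + 1) with hδdef
  have hδ0 : ∀ n, 0 ≤ δ n := by
    intro n
    have h1 : (0:ℝ) < 1 / ((n:ℝ) + 1) := by positivity
    have h2 := hε0 n
    simp only [hδdef]
    linarith
  set α : ℕ → ℝ := fun n => min (max (d n - r) 0 / r) 1 with hαdef
  have hα0 : ∀ n, 0 ≤ α n := fun n =>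
    le_min (div_nonneg (le_max_right _ _) hr.le) zero_le_one
  have hα1 : ∀ n, α n ≤ 1 := fun n => min_le_right _ _
  refine ⟨fun n => mix (α n) (hα0 n) (hα1 n) (ζ n) (πs n), ?_, ?_⟩
  · -- membership
    intro n
    have key : D (mix (α n) (hα0 n) (hα1 n) (ζ n) (πs n)) (ζ n) ≤ (1 - α n) * d n := by
      have := hDconv (α n) (hα0 n) (hα1 n) (ζ n) (πs n) (ζ n) (ζ n)
      rw [mix_self] at this
      have hzz : D (ζ n) (ζ n) = 0 := (hDeq _ _).mpr rfl
      rw [hzz, mul_zero, zero_add, hDsymm (πs n) (ζ n)] at this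
      simpa [hddef, hDsymm] using this
    have hkey2 : (1 - α n) * d n ≤ r := alpha_key (d n) r (hD0 _ _) hr
    exact le_trans (hS_le _ _ (hζC n)) (le_trans key hkey2)
  · -- TV convergence
    have hαδ : ∀ n, α n ≤ δ n / r := by
      intro n
      refine le_trans (min_le_left _ _) (div_le_div_of_nonneg_right ?_ hr.le)
      exact max_le (by have := hζlt n; simp only [hddef, hδdef]; linarith) (hδ0 n)
    have hδlim : Tendsto δ atTop (𝓝 0) := by
      have h1 : Tendsto (fun n : ℕ => 1 / ((n : ℝ) + 1)) atTop (𝓝 0) :=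
        tendsto_one_div_add_atTop_nhds_zero_nat
      have := (hεlim.const_mul 2).add h1
      simpa [hδdef] using this
    have hαlim : Tendsto α atTop (𝓝 0) := by
      refine squeeze_zero hα0 hαδ ?_
      simpa using hδlim.div_const r
    refine squeeze_zero (fun n => tvDist_nonneg _ _) (fun n => ?_) hαlim
    exact tv_mix_le (α n) (hα0 n) (hα1 n) (ζ n) (πs n)
end

section
/- Consider the monopoly pricing problem: for a price p ≥ 0, the revenue function is v_p(θ) = p·1[θ ≥ p] on Θ = [0,∞). Let λ > 0 and let Π be the set of Borel probability measures π on [0,∞) with π([0,λ]) ≥ 1/2 and π([λ,∞)) ≥ 1/2 (median λ). Then the payoff guarantee of the posted price p = λ satisfies inf_{π ∈ Π} ∫ v_λ dπ = λ/2, and for every price p ≥ 0, inf_{π ∈ Π} ∫ v_p dπ ≤ λ/2. -/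
open MeasureTheory Filter Topology
open scoped NNReal ENNReal

/-- Revenue function of posted price `p` in the monopoly selling problem on `Θ = [0,∞)`. -/
noncomputable def postedRev (p : ℝ≥0) : ℝ≥0 → ℝ :=
  fun θ => if p ≤ θ then (p : ℝ) else 0

/-- Ambiguity set of all valuation distributions on `[0,∞)` with median `lam`. -/
def medianSet (lam : ℝ≥0) : Set (ProbabilityMeasure ℝ≥0) :=
  {π | 1/2 ≤ (π : Measure ℝ≥0) (Set.Iic lam) ∧ 1/2 ≤ (π : Measure ℝ≥0) (Set.Ici lam)}

noncomputable def twoPoint (lam : ℝ≥0) : Measure ℝ≥0 :=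
  (2 : ℝ≥0∞)⁻¹ • (Measure.dirac 0 + Measure.dirac lam)

lemma twoPoint_apply (lam : ℝ≥0) {s : Set ℝ≥0} (hs : MeasurableSet s) :
    twoPoint lam s = 2⁻¹ * ((Measure.dirac 0 s) + (Measure.dirac lam s)) := by
  simp [twoPoint, Measure.add_apply, mul_add]

lemma half_add : (2 : ℝ≥0∞)⁻¹ * (1 + 1) = 1 := by
  rw [show (1 + 1 : ℝ≥0∞) = 2 by norm_num]
  exact ENNReal.inv_mul_cancel (by norm_num) (by norm_num)

instance (lam : ℝ≥0) : IsProbabilityMeasure (twoPoint lam) := by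
  constructor
  rw [twoPoint_apply lam MeasurableSet.univ]
  simpa using half_add

/-- With the median-`lam` ambiguity set, the revenue guarantee of the posted
price `lam` equals `lam/2`, and no posted price has a larger revenue guarantee. -/
theorem stmt10 (lam : ℝ≥0) (hlam : 0 < lam) :
    sInf ((fun π : ProbabilityMeasure ℝ≥0 =>
        ∫ θ, postedRev lam θ ∂(π : Measure ℝ≥0)) '' medianSet lam) = (lam : ℝ) / 2 ∧
    ∀ p : ℝ≥0,
      sInf ((fun π : ProbabilityMeasure ℝ≥0 =>
        ∫ θ, postedRev p θ ∂(π : Measure ℝ≥0)) '' medianSet lam) ≤ (lam : ℝ) / 2 := by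
  have postedRev_eq : ∀ p : ℝ≥0, postedRev p = (Set.Ici p).indicator (fun _ => (p : ℝ)) := by
    intro p; funext θ; simp [postedRev, Set.indicator, Set.mem_Ici]
  have integral_postedRev : ∀ (p : ℝ≥0) (μ : Measure ℝ≥0),
      ∫ θ, postedRev p θ ∂μ = (μ (Set.Ici p)).toReal * (p : ℝ) := by
    intro p μ
    rw [postedRev_eq, integral_indicator_const _ measurableSet_Ici, smul_eq_mul]; rfl
  set π0 : ProbabilityMeasure ℝ≥0 := ⟨twoPoint lam, inferInstance⟩ with hπ0
  have hIci : (π0 : Measure ℝ≥0) (Set.Ici lam) = 2⁻¹ := by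
    show twoPoint lam (Set.Ici lam) = 2⁻¹
    rw [twoPoint_apply lam measurableSet_Ici,
      Measure.dirac_apply' _ measurableSet_Ici, Measure.dirac_apply' _ measurableSet_Ici]
    simp [Set.indicator, Set.mem_Ici, hlam.not_ge, hlam.ne', le_refl]
  have hmem : π0 ∈ medianSet lam := by
    constructor
    · show (1:ℝ≥0∞)/2 ≤ twoPoint lam (Set.Iic lam)
      rw [twoPoint_apply lam measurableSet_Iic,
        Measure.dirac_apply' _ measurableSet_Iic, Measure.dirac_apply' _ measurableSet_Iic]
      simp only [Set.indicator, Set.mem_Iic, zero_le, le_refl, if_true, Pi.one_apply]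
      rw [half_add, ENNReal.div_le_iff (by norm_num) (by norm_num)]
      norm_num
    · rw [hIci]
      simp [ENNReal.div_eq_inv_mul]
  have hval : ∀ p : ℝ≥0, (∫ θ, postedRev p θ ∂(π0 : Measure ℝ≥0)) ≤ (lam : ℝ) / 2 := by
    intro p
    rw [integral_postedRev]
    show (twoPoint lam (Set.Ici p)).toReal * (p:ℝ) ≤ _
    rcases eq_or_lt_of_le (zero_le : (0:ℝ≥0) ≤ p) with h0 | hp
    · simp [← h0]; positivity
    rcases le_or_gt p lam with hpl | hpl
    · have h : twoPoint lam (Set.Ici p) = 2⁻¹ := by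
        rw [twoPoint_apply lam measurableSet_Ici,
          Measure.dirac_apply' _ measurableSet_Ici, Measure.dirac_apply' _ measurableSet_Ici]
        simp [Set.indicator, Set.mem_Ici, hp.not_ge, hpl, hp.ne']
      rw [h, ENNReal.toReal_inv]
      have hpl' : (p:ℝ) ≤ lam := hpl
      norm_num
      linarith
    · have h : twoPoint lam (Set.Ici p) = 0 := by
        rw [twoPoint_apply lam measurableSet_Ici,
          Measure.dirac_apply' _ measurableSet_Ici, Measure.dirac_apply' _ measurableSet_Ici]
        simp [Set.indicator, Set.mem_Ici, hpl.not_ge, hp.not_ge, hp.ne']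
      rw [h]
      simp
      positivity
  have hbdd : ∀ p : ℝ≥0, BddBelow ((fun π : ProbabilityMeasure ℝ≥0 =>
      ∫ θ, postedRev p θ ∂(π : Measure ℝ≥0)) '' medianSet lam) := by
    intro p
    refine ⟨0, ?_⟩
    rintro y ⟨π, _, rfl⟩
    exact integral_nonneg fun θ => by unfold postedRev; positivity
  have hvlam : (∫ θ, postedRev lam θ ∂(π0 : Measure ℝ≥0)) = (lam : ℝ) / 2 := by
    rw [integral_postedRev, hIci, ENNReal.toReal_inv]
    norm_num
    ring
  constructor
  · apply le_antisymm
    · calc sInf _ ≤ ∫ θ, postedRev lam θ ∂(π0 : Measure ℝ≥0) :=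
            csInf_le (hbdd lam) ⟨π0, hmem, rfl⟩
        _ = (lam:ℝ)/2 := hvlam
    · apply le_csInf ((Set.nonempty_of_mem hmem).image _)
      rintro y ⟨π, hπ, rfl⟩
      show (lam:ℝ)/2 ≤ ∫ θ, postedRev lam θ ∂(π : Measure ℝ≥0)
      rw [integral_postedRev]
      have hfin : (π : Measure ℝ≥0) (Set.Ici lam) ≠ ⊤ := measure_ne_top _ _
      have h2 : (1/2 : ℝ) ≤ ((π : Measure ℝ≥0) (Set.Ici lam)).toReal := by
        have := ENNReal.toReal_mono hfin hπ.2
        simpa using this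
      calc (lam:ℝ)/2 = (1/2) * lam := by ring
        _ ≤ _ := mul_le_mul_of_nonneg_right h2 lam.coe_nonneg
  · intro p
    calc sInf _ ≤ ∫ θ, postedRev p θ ∂(π0 : Measure ℝ≥0) :=
          csInf_le (hbdd p) ⟨π0, hmem, rfl⟩
      _ ≤ (lam:ℝ)/2 := hval p
end

section
/- Let Θ be a Polish space, Π a nonempty convex set of probability measures, D a jointly convex metric on probability measures, and v : Θ → ℝ bounded measurable. Then the function r ↦ inf_{π ∈ N_D(Π,r)} ∫ v dπ is convex on (0, ∞), where N_D(Π,r) = { π : inf_{π' ∈ Π} D(π,π') ≤ r }. -/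
open MeasureTheory Filter Topology

/-- Distance from a prior to a set of priors. -/
noncomputable def distToSet {Θ : Type*} [MeasurableSpace Θ]
    (D : ProbabilityMeasure Θ → ProbabilityMeasure Θ → ℝ)
    (π : ProbabilityMeasure Θ) (P : Set (ProbabilityMeasure Θ)) : ℝ :=
  sInf ((fun π' => D π π') '' P)

/-- The radius-`r` `D`-neighborhood of a set of priors. -/
def nbhd {Θ : Type*} [MeasurableSpace Θ]
    (D : ProbabilityMeasure Θ → ProbabilityMeasure Θ → ℝ)
    (P : Set (ProbabilityMeasure Θ)) (r : ℝ) : Set (ProbabilityMeasure Θ) :=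
  {π | distToSet D π P ≤ r}

/-- The payoff guarantee of value function `v` over the radius-`r` neighborhood of `P`. -/
noncomputable def guarantee {Θ : Type*} [MeasurableSpace Θ]
    (D : ProbabilityMeasure Θ → ProbabilityMeasure Θ → ℝ)
    (P : Set (ProbabilityMeasure Θ)) (v : Θ → ℝ) (r : ℝ) : ℝ :=
  sInf ((fun π : ProbabilityMeasure Θ => ∫ θ, v θ ∂(π : Measure Θ)) '' nbhd D P r)

/-- For a convex ambiguity set `P` and jointly convex metric `D`, the payoff
guarantee over the radius-`r` neighborhood of `P` is a convex function of the radius on `(0,∞)`. -/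
theorem stmt15 {Θ : Type*} [TopologicalSpace Θ] [PolishSpace Θ] [MeasurableSpace Θ] [BorelSpace Θ]
    (D : ProbabilityMeasure Θ → ProbabilityMeasure Θ → ℝ)
    (hD0 : ∀ μ ν, 0 ≤ D μ ν) (hDsymm : ∀ μ ν, D μ ν = D ν μ)
    (hDtri : ∀ μ ν ρ, D μ ρ ≤ D μ ν + D ν ρ)
    (hDeq : ∀ μ ν, D μ ν = 0 ↔ μ = ν)
    (hDconv : ∀ (l : ℝ) (hl0 : 0 ≤ l) (hl1 : l ≤ 1) (μ₁ μ₂ ν₁ ν₂ : ProbabilityMeasure Θ),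
      D (mix l hl0 hl1 μ₁ μ₂) (mix l hl0 hl1 ν₁ ν₂) ≤ l * D μ₁ ν₁ + (1 - l) * D μ₂ ν₂)
    (P : Set (ProbabilityMeasure Θ)) (hP : P.Nonempty)
    (hPconv : ∀ (l : ℝ) (hl0 : 0 ≤ l) (hl1 : l ≤ 1), ∀ μ ∈ P, ∀ ν ∈ P,
      mix l hl0 hl1 μ ν ∈ P)
    (v : Θ → ℝ) (M : ℝ) (hvb : ∀ θ, |v θ| ≤ M) (hvm : Measurable v) :
    ConvexOn ℝ (Set.Ioi (0 : ℝ)) (guarantee D P v) := by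

  obtain ⟨π₀, hπ₀⟩ := hP
  -- integrability of v wrt any probability measure
  have hint : ∀ π : ProbabilityMeasure Θ, Integrable v (π : Measure Θ) := fun π =>
    (integrable_const M).mono' hvm.aestronglyMeasurable
      (Filter.Eventually.of_forall (fun θ => by simpa using hvb θ))
  have hIbound : ∀ π : ProbabilityMeasure Θ, -M ≤ ∫ θ, v θ ∂(π : Measure Θ) := by
    intro π
    have h := norm_integral_le_of_norm_le_const (μ := (π : Measure Θ)) (f := v) (C := M)
      (Filter.Eventually.of_forall fun θ => by simpa using hvb θ)
    simp only [measure_univ, probReal_univ, ENNReal.toReal_one, mul_one, Real.norm_eq_abs] at h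
    linarith [(abs_le.mp h).1]
  have hbdd : ∀ r : ℝ, BddBelow
      ((fun π : ProbabilityMeasure Θ => ∫ θ, v θ ∂(π : Measure Θ)) '' nbhd D P r) := by
    intro r
    exact ⟨-M, by rintro z ⟨π, -, rfl⟩; exact hIbound π⟩
  have hDbdd : ∀ π : ProbabilityMeasure Θ, BddBelow ((fun π' => D π π') '' P) := by
    intro π
    exact ⟨0, by rintro z ⟨π', -, rfl⟩; exact hD0 π π'⟩
  have hnbne : ∀ r : ℝ, 0 ≤ r → (nbhd D P r).Nonempty := by
    intro r hr
    refine ⟨π₀, ?_⟩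
    have h0 : distToSet D π₀ P ≤ 0 := by
      have : D π₀ π₀ = 0 := (hDeq π₀ π₀).mpr rfl
      calc distToSet D π₀ P ≤ D π₀ π₀ := csInf_le (hDbdd π₀) ⟨π₀, hπ₀, rfl⟩
        _ = 0 := this
    exact h0.trans hr
  -- mixing neighborhood members
  have hmixmem : ∀ (l : ℝ) (hl0 : 0 ≤ l) (hl1 : l ≤ 1) (r₁ r₂ : ℝ)
      (π₁ π₂ : ProbabilityMeasure Θ), π₁ ∈ nbhd D P r₁ → π₂ ∈ nbhd D P r₂ →
      mix l hl0 hl1 π₁ π₂ ∈ nbhd D P (l * r₁ + (1 - l) * r₂) := by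
    intro l hl0 hl1 r₁ r₂ π₁ π₂ h₁ h₂
    show distToSet D (mix l hl0 hl1 π₁ π₂) P ≤ l * r₁ + (1 - l) * r₂
    refine le_of_forall_pos_le_add ?_
    intro ε hε
    obtain ⟨z₁, ⟨π₁', hπ₁', rfl⟩, hz₁⟩ :=
      exists_lt_of_csInf_lt (s := (fun π' => D π₁ π') '' P) ⟨D π₁ π₀, π₀, hπ₀, rfl⟩
        (lt_add_of_pos_right _ hε)
    obtain ⟨z₂, ⟨π₂', hπ₂', rfl⟩, hz₂⟩ :=
      exists_lt_of_csInf_lt (s := (fun π' => D π₂ π') '' P) ⟨D π₂ π₀, π₀, hπ₀, rfl⟩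
        (lt_add_of_pos_right _ hε)
    have hd₁ : D π₁ π₁' ≤ r₁ + ε := le_trans hz₁.le (by exact add_le_add_left h₁ ε)
    have hd₂ : D π₂ π₂' ≤ r₂ + ε := le_trans hz₂.le (by exact add_le_add_left h₂ ε)
    have hmem : mix l hl0 hl1 π₁' π₂' ∈ P := hPconv l hl0 hl1 π₁' hπ₁' π₂' hπ₂'
    have hle : distToSet D (mix l hl0 hl1 π₁ π₂) P ≤
        D (mix l hl0 hl1 π₁ π₂) (mix l hl0 hl1 π₁' π₂') :=
      csInf_le (hDbdd _) ⟨_, hmem, rfl⟩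
    have hconv := hDconv l hl0 hl1 π₁ π₂ π₁' π₂'
    have h1 : l * D π₁ π₁' ≤ l * (r₁ + ε) := mul_le_mul_of_nonneg_left hd₁ hl0
    have h2 : (1 - l) * D π₂ π₂' ≤ (1 - l) * (r₂ + ε) :=
      mul_le_mul_of_nonneg_left hd₂ (by linarith)
    nlinarith
  -- integral of a mixture
  have hintmix : ∀ (l : ℝ) (hl0 : 0 ≤ l) (hl1 : l ≤ 1) (μ ν : ProbabilityMeasure Θ),
      ∫ θ, v θ ∂((mix l hl0 hl1 μ ν : ProbabilityMeasure Θ) : Measure Θ) =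
        l * ∫ θ, v θ ∂(μ : Measure Θ) + (1 - l) * ∫ θ, v θ ∂(ν : Measure Θ) := by
    intro l hl0 hl1 μ ν
    show ∫ θ, v θ ∂(ENNReal.ofReal l • (μ : Measure Θ) + ENNReal.ofReal (1 - l) • (ν : Measure Θ)) = _
    rw [integral_add_measure ((hint μ).smul_measure (by simp)) ((hint ν).smul_measure (by simp)),
      integral_smul_measure, integral_smul_measure,
      ENNReal.toReal_ofReal hl0, ENNReal.toReal_ofReal (by linarith)]
    simp [smul_eq_mul]
  refine ⟨convex_Ioi 0, ?_⟩
  intro x hx y hy a b ha hb hab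
  have hb' : b = 1 - a := by linarith
  subst hb'
  have ha1 : a ≤ 1 := by linarith
  simp only [smul_eq_mul]
  refine le_of_forall_pos_le_add ?_
  intro ε hε
  have hxne := hnbne x (le_of_lt hx)
  have hyne := hnbne y (le_of_lt hy)
  obtain ⟨z₁, ⟨π₁, hπ₁, rfl⟩, hz₁⟩ :=
    exists_lt_of_csInf_lt (hxne.image _) (lt_add_of_pos_right (guarantee D P v x) hε)
  obtain ⟨z₂, ⟨π₂, hπ₂, rfl⟩, hz₂⟩ :=
    exists_lt_of_csInf_lt (hyne.image _) (lt_add_of_pos_right (guarantee D P v y) hε)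
  have hmem := hmixmem a ha ha1 x y π₁ π₂ hπ₁ hπ₂
  have hle : guarantee D P v (a * x + (1 - a) * y) ≤
      ∫ θ, v θ ∂((mix a ha ha1 π₁ π₂ : ProbabilityMeasure Θ) : Measure Θ) :=
    csInf_le (hbdd _) ⟨_, hmem, rfl⟩
  rw [hintmix a ha ha1 π₁ π₂] at hle
  have h1 : a * ∫ θ, v θ ∂(π₁ : Measure Θ) ≤ a * (guarantee D P v x + ε) :=
    mul_le_mul_of_nonneg_left hz₁.le ha
  have h2 : (1 - a) * ∫ θ, v θ ∂(π₂ : Measure Θ) ≤ (1 - a) * (guarantee D P v y + ε) :=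
    mul_le_mul_of_nonneg_left hz₂.le (by linarith)
  nlinarith
end

section
/- Let Θ be a perfect Polish space (no isolated points) and π a Borel probability measure on Θ. Then there exists a Borel set A ⊆ Θ with π(A) = 1 and a sequence (π_n) of Borel probability measures, each concentrated on Θ \ A, converging weakly to π. -/
open MeasureTheory Filter Topology

/-- In a perfect Polish space, any prior `π` has a full-measure Borel set `A`
and a sequence of priors concentrated on the complement of `A` converging weakly to `π`. -/
theorem stmt16 {Θ : Type*} [TopologicalSpace Θ] [PolishSpace Θ] [MeasurableSpace Θ] [BorelSpace Θ]
    (hperf : ∀ θ : Θ, (𝓝[≠] θ).NeBot)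
    (π : ProbabilityMeasure Θ) :
    ∃ A : Set Θ, MeasurableSet A ∧ (π : Measure Θ) A = 1 ∧
      ∃ πs : ℕ → ProbabilityMeasure Θ,
        (∀ n, (πs n : Measure Θ) A = 0) ∧ Tendsto πs atTop (𝓝 π) := by
  letI := TopologicalSpace.upgradeIsCompletelyMetrizable Θ
  have hne : Nonempty Θ := by
    by_contra h
    rw [not_nonempty_iff] at h
    have h1 : (π : Measure Θ) Set.univ = 1 := measure_univ
    rw [Set.univ_eq_empty_iff.mpr h, measure_empty] at h1
    exact zero_ne_one h1
  -- the set of atoms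
  set S : Set Θ := {θ | 0 < (π : Measure Θ) {θ}} with hS
  have hScount : S.Countable :=
    Measure.countable_meas_pos_of_disjoint_iUnion (μ := (π : Measure Θ))
      (As := fun θ : Θ => {θ}) (fun θ => measurableSet_singleton θ)
      (fun a b hab => by simpa [Function.onFun] using hab)
  -- the complement of the atoms is dense
  have hres : Sᶜ ∈ residual Θ := by
    have hrw : Sᶜ = ⋂ x ∈ S, ({x}ᶜ : Set Θ) := by
      ext y
      simp only [Set.mem_compl_iff, Set.mem_iInter, Set.mem_singleton_iff]
      exact ⟨fun h i hi hyi => h (hyi ▸ hi), fun h hy => h y hy rfl⟩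
    rw [hrw]
    refine (countable_bInter_mem hScount).mpr fun x _ => ?_
    haveI := hperf x
    exact residual_of_dense_open isOpen_compl_singleton (dense_compl_singleton x)
  have hdense : Dense (Sᶜ) := dense_of_mem_residual hres
  -- choose a countable dense subset of non-atoms
  obtain ⟨c, hcS, hccount, hcdense⟩ := hdense.exists_countable_dense_subset
  obtain ⟨x, hx⟩ := hccount.exists_eq_range (hcdense.nonempty)
  -- the full-measure set is the complement of c
  have hcmeas : MeasurableSet c := hccount.measurableSet
  have hc0 : (π : Measure Θ) c = 0 := by
    have : c = ⋃ y ∈ c, ({y} : Set Θ) := by simp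
    rw [this]
    refine measure_biUnion_null_iff hccount |>.mpr fun y hy => ?_
    have : y ∈ Sᶜ := hcS hy
    simpa [hS] using this
  refine ⟨cᶜ, hcmeas.compl, ?_, ?_⟩
  · rw [prob_compl_eq_one_iff hcmeas]
    exact hc0
  -- construct the approximating sequence
  have hxc : ∀ k, x k ∈ c := fun k => hx ▸ Set.mem_range_self k
  have hxdr : DenseRange x := by rw [DenseRange, ← hx]; exact hcdense
  have hex : ∀ n : ℕ, ∀ θ : Θ, ∃ k : ℕ, dist θ (x k) < 1 / (n + 1) := by
    intro n θ
    have := Metric.dense_iff.mp hxdr θ (1 / (n + 1)) (by positivity)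
    obtain ⟨y, hy1, ⟨k, rfl⟩⟩ := this
    exact ⟨k, by simpa [dist_comm] using hy1⟩
  set f : ℕ → Θ → Θ := fun n θ => x (Nat.find (hex n θ)) with hf
  have hfmeas : ∀ n, Measurable (f n) := by
    intro n
    exact Measurable.find (f := fun k _ => x k)
      (fun k => measurable_const)
      (fun k => measurableSet_lt (measurable_id.dist measurable_const) measurable_const)
      (hex n)
  have hfc : ∀ n θ, f n θ ∈ c := fun n θ => hxc _
  have hfdist : ∀ n θ, dist θ (f n θ) < 1 / (n + 1) := fun n θ => Nat.find_spec (hex n θ)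
  have hftendsto : ∀ θ : Θ, Tendsto (fun n => f n θ) atTop (𝓝 θ) := by
    intro θ
    rw [tendsto_iff_dist_tendsto_zero]
    refine squeeze_zero (fun n => dist_nonneg) (fun n => by
        simpa [dist_comm, one_div] using (hfdist n θ).le) ?_
    simpa [one_div] using tendsto_one_div_add_atTop_nhds_zero_nat (𝕜 := ℝ)
  refine ⟨fun n => π.map (hfmeas n).aemeasurable, ?_, ?_⟩
  · intro n
    rw [ProbabilityMeasure.map_apply' _ _ hcmeas.compl]
    have : f n ⁻¹' cᶜ = ∅ := by
      ext θ; simp [hfc n θ]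
    rw [this, measure_empty]
  · rw [ProbabilityMeasure.tendsto_iff_forall_integral_tendsto]
    intro g
    have heq : ∀ n, ∫ ω, g ω ∂((π.map (hfmeas n).aemeasurable : Measure Θ)) =
        ∫ θ, g (f n θ) ∂(π : Measure Θ) := by
      intro n
      rw [ProbabilityMeasure.toMeasure_map]
      exact integral_map (hfmeas n).aemeasurable g.continuous.aestronglyMeasurable
    simp only [heq]
    refine tendsto_integral_of_dominated_convergence (fun _ => ‖g‖)
      (fun n => (g.continuous.measurable.comp (hfmeas n)).aestronglyMeasurable)
      (integrable_const _) (fun n => Filter.Eventually.of_forall fun θ => g.norm_coe_le_norm _)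
      (Filter.Eventually.of_forall fun θ => ?_)
    exact (g.continuous.tendsto θ).comp (hftendsto θ)
end

section
/- Let Θ be a perfect Polish space, π₀ a Borel probability measure, and γ ∈ (0,1). Let Π be the total-variation ball { π : ‖π − π₀‖_TV ≤ γ }. Then Π is not globally robust: there exists a bounded measurable v : Θ → ℝ (an indicator function) and a sequence (π_n) of probability measures converging weakly to π₀ ∈ Π such that ∫ v dπ_n = 0 for all n while inf_{π ∈ Π} ∫ v dπ ≥ 1 − γ. -/
open MeasureTheory Filter Topology

/-- In a perfect Polish space, the total-variation ball of radius `γ ∈ (0,1)`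
around `π₀` is not globally robust: an indicator value function has guarantee at least
`1 − γ` over the ball, yet a sequence converging weakly to `π₀` yields payoff `0`. -/
theorem stmt17 {Θ : Type*} [TopologicalSpace Θ] [PolishSpace Θ] [MeasurableSpace Θ] [BorelSpace Θ]
    (hperf : ∀ θ : Θ, (𝓝[≠] θ).NeBot)
    (π₀ : ProbabilityMeasure Θ) (γ : ℝ) (hγ0 : 0 < γ) (hγ1 : γ < 1) :
    ∃ A : Set Θ, MeasurableSet A ∧
      ∃ πs : ℕ → ProbabilityMeasure Θ,
        Tendsto πs atTop (𝓝 π₀) ∧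
        (∀ n, ∫ θ, A.indicator (fun _ => (1 : ℝ)) θ ∂(πs n : Measure Θ) = 0) ∧
        1 - γ ≤ sInf ((fun π : ProbabilityMeasure Θ =>
          ∫ θ, A.indicator (fun _ => (1 : ℝ)) θ ∂(π : Measure Θ)) ''
            {π : ProbabilityMeasure Θ | tvDist π π₀ ≤ γ}) := by
  classical
  letI := TopologicalSpace.upgradeIsCompletelyMetrizable Θ
  have hne : Nonempty Θ := by
    by_contra h
    rw [not_nonempty_iff] at h
    have h1 := measure_univ (μ := (π₀ : Measure Θ))
    rw [Set.univ_eq_empty_iff.mpr h, measure_empty] at h1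
    exact zero_ne_one h1
  set S : Set Θ := {θ | 0 < (π₀ : Measure Θ) {θ}} with hS
  have hScount : S.Countable := by
    apply Measure.countable_meas_pos_of_disjoint_iUnion (As := fun θ : Θ => {θ})
      (fun _ => measurableSet_singleton _)
    intro i j hij
    simp [Function.onFun, hij]
  have hSc_dense : Dense (Sᶜ) := by
    have : Sᶜ = ⋂ s ∈ S, ({s}ᶜ : Set Θ) := by
      ext θ
      simp only [Set.mem_compl_iff, Set.mem_iInter, Set.mem_singleton_iff]
      constructor
      · intro h s hs hθ; exact h (hθ ▸ hs)
      · intro h hθ; exact h θ hθ rfl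
    rw [this]
    exact dense_biInter_of_isOpen (fun s _ => isOpen_compl_singleton) hScount
      (fun s _ => dense_compl_singleton s)
  obtain ⟨t, hts, htc, htd⟩ := hSc_dense.exists_countable_dense_subset
  obtain ⟨d, hd⟩ := htc.exists_eq_range htd.nonempty
  have hex : ∀ (n : ℕ) (θ : Θ), ∃ k, dist θ (d k) < 1 / (n + 1) := by
    intro n θ
    have hpos : (1 : ℝ) / (n + 1) > 0 := by positivity
    obtain ⟨x, hx, hxd⟩ := Metric.dense_iff.mp htd θ (1 / (n+1)) hpos
    rw [hd] at hxd
    obtain ⟨k, rfl⟩ := hxd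
    exact ⟨k, by rwa [Metric.mem_ball, dist_comm] at hx⟩
  -- the approximating maps
  set f : ℕ → Θ → Θ := fun n θ => d (Nat.find (hex n θ)) with hf
  have hfd : ∀ n θ, dist θ (f n θ) < 1 / (n + 1) := fun n θ => Nat.find_spec (hex n θ)
  have hfm : ∀ n, Measurable (f n) := by
    intro n
    apply measurable_from_top.comp
    apply measurable_find
    intro k
    have : {x : Θ | dist x (d k) < 1 / (n + 1)} = Metric.ball (d k) (1 / (n + 1)) := by
      ext x; simp [Metric.mem_ball]
    rw [this]
    exact Metric.isOpen_ball.measurableSet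
  -- the set A
  set A : Set Θ := (Set.range d)ᶜ with hA
  have hAm : MeasurableSet A := (Set.Countable.measurableSet (Set.countable_range d)).compl
  have hA0 : (π₀ : Measure Θ) (Set.range d) = 0 := by
    have : Set.range d = ⋃ k, ({d k} : Set Θ) := by
      ext x; simp [Set.mem_range, eq_comm]
    rw [this]
    apply measure_iUnion_null
    intro k
    have hdk : d k ∈ Sᶜ := hts (hd ▸ Set.mem_range_self k)
    simpa [hS] using hdk
  have hA1 : (π₀ : Measure Θ) A = 1 := by
    rw [hA, measure_compl (Set.Countable.measurableSet (Set.countable_range d))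
      (measure_ne_top _ _), hA0, measure_univ]
    simp
  -- the sequence
  set πs : ℕ → ProbabilityMeasure Θ := fun n => π₀.map (hfm n).aemeasurable with hπs
  refine ⟨A, hAm, πs, ?_, ?_, ?_⟩
  · -- weak convergence
    rw [ProbabilityMeasure.tendsto_iff_forall_integral_tendsto]
    intro g
    have key : ∀ n, ∫ θ, g θ ∂(πs n : Measure Θ) = ∫ θ, g (f n θ) ∂(π₀ : Measure Θ) := by
      intro n
      rw [hπs]
      simp only [ProbabilityMeasure.toMeasure_map]
      exact integral_map (hfm n).aemeasurable g.continuous.measurable.aestronglyMeasurable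
    simp_rw [key]
    apply tendsto_integral_of_dominated_convergence (fun _ => ‖g‖)
    · exact fun n => (g.continuous.measurable.comp (hfm n)).aestronglyMeasurable
    · exact integrable_const _
    · intro n
      exact Filter.Eventually.of_forall fun θ => g.norm_coe_le_norm _
    · apply Filter.Eventually.of_forall
      intro θ
      have hto : Tendsto (fun n => f n θ) atTop (𝓝 θ) := by
        rw [tendsto_iff_dist_tendsto_zero]
        apply squeeze_zero (fun n => dist_nonneg) (fun n => (dist_comm (f n θ) θ ▸ (hfd n θ)).le)
        exact tendsto_one_div_add_atTop_nhds_zero_nat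
      exact (g.continuous.tendsto θ).comp hto
  · -- integrals vanish
    intro n
    have hm : ((πs n : Measure Θ)) A = 0 := by
      rw [hπs]
      simp only [ProbabilityMeasure.toMeasure_map]
      rw [Measure.map_apply (hfm n) hAm]
      have : f n ⁻¹' A = ∅ := by
        ext θ
        simp [hA, Set.mem_preimage, hf]
      rw [this, measure_empty]
    have h5 : ∫ θ, A.indicator (fun _ => (1:ℝ)) θ ∂((πs n : Measure Θ))
        = (((πs n : Measure Θ)) A).toReal := integral_indicator_one hAm
    rw [h5, hm]
    simp
  · -- lower bound on sInf
    apply le_csInf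
    · refine ⟨_, ⟨π₀, ?_, rfl⟩⟩
      have : tvDist π₀ π₀ = 0 := by
        have : ∀ B : {A : Set Θ // MeasurableSet A},
            |((π₀ : Measure Θ) B.1).toReal - ((π₀ : Measure Θ) B.1).toReal| = 0 := by
          intro B; simp
        simp only [tvDist, this, ciSup_const]
      simp only [Set.mem_setOf_eq, this]
      exact hγ0.le
    · rintro b ⟨π, hπ, rfl⟩
      simp only [Set.mem_setOf_eq] at hπ
      have hbdd : BddAbove (Set.range fun B : {A : Set Θ // MeasurableSet A} =>
          |((π : Measure Θ) B.1).toReal - ((π₀ : Measure Θ) B.1).toReal|) := by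
        refine ⟨1, ?_⟩
        rintro x ⟨B, rfl⟩
        have h1 : ((π : Measure Θ) B.1).toReal ≤ 1 := by
          apply ENNReal.toReal_le_of_le_ofReal one_pos.le
          simpa using prob_le_one (μ := (π : Measure Θ)) (s := B.1)
        have h2 : ((π₀ : Measure Θ) B.1).toReal ≤ 1 := by
          apply ENNReal.toReal_le_of_le_ofReal one_pos.le
          simpa using prob_le_one (μ := (π₀ : Measure Θ)) (s := B.1)
        have h3 : (0:ℝ) ≤ ((π : Measure Θ) B.1).toReal := ENNReal.toReal_nonneg
        have h4 : (0:ℝ) ≤ ((π₀ : Measure Θ) B.1).toReal := ENNReal.toReal_nonneg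
        rw [abs_le]
        constructor <;> linarith
      have hle : |((π : Measure Θ) A).toReal - ((π₀ : Measure Θ) A).toReal| ≤ tvDist π π₀ :=
        le_ciSup hbdd (⟨A, hAm⟩ : {A : Set Θ // MeasurableSet A})
      rw [hA1] at hle
      simp only [ENNReal.toReal_one] at hle
      have : 1 - ((π : Measure Θ) A).toReal ≤ γ := by
        have := (abs_le.mp (hle.trans hπ)).1
        linarith
      show 1 - γ ≤ ∫ θ, A.indicator (fun _ => (1:ℝ)) θ ∂(π : Measure Θ)
      have h5 : ∫ θ, A.indicator (fun _ => (1:ℝ)) θ ∂(π : Measure Θ)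
          = ((π : Measure Θ) A).toReal := integral_indicator_one hAm
      rw [h5]
      linarith
end

section
/- Let Θ be a perfect Polish space and π₀ a Borel probability measure on Θ. Then the singleton ambiguity set {π₀} is not globally robust: there exists a bounded measurable v : Θ → ℝ and a sequence (π_n) of probability measures converging weakly to π₀ such that ∫ v dπ_n = 0 for all n while ∫ v dπ₀ = 1. -/
open MeasureTheory Filter Topology Set

/-- In a perfect Polish space, a singleton ambiguity set `{π₀}` is not globally
robust: there is a bounded measurable value function with Bayesian payoff `1` under `π₀` but
payoff `0` along some sequence of priors converging weakly to `π₀`. -/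
theorem stmt18 {Θ : Type*} [TopologicalSpace Θ] [PolishSpace Θ] [MeasurableSpace Θ] [BorelSpace Θ]
    (hperf : ∀ θ : Θ, (𝓝[≠] θ).NeBot)
    (π₀ : ProbabilityMeasure Θ) :
    ∃ v : Θ → ℝ, Measurable v ∧ (∀ θ, |v θ| ≤ 1) ∧
      ∃ πs : ℕ → ProbabilityMeasure Θ,
        Tendsto πs atTop (𝓝 π₀) ∧
        (∀ n, ∫ θ, v θ ∂(πs n : Measure Θ) = 0) ∧
        ∫ θ, v θ ∂(π₀ : Measure Θ) = 1 := by
  classical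
  letI := TopologicalSpace.upgradeIsCompletelyMetrizable Θ
  have hne : Nonempty Θ := π₀.nonempty
  set μ : Measure Θ := (π₀ : Measure Θ) with hμ
  -- atoms are countable
  have hatoms : Set.Countable {x : Θ | 0 < μ {x}} :=
    Measure.countable_meas_pos_of_disjoint_iUnion (μ := μ)
      (fun x => measurableSet_singleton x)
      (fun x y hxy => by simpa [Function.onFun] using disjoint_singleton.mpr hxy)
  set S : Set Θ := {x : Θ | μ {x} = 0} with hS
  -- S is dense (complement of a countable set in a perfect Polish space)
  have hSdense : Dense S := by
    apply dense_of_mem_residual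
    have : (⋂ x ∈ {x : Θ | 0 < μ {x}}, ({x}ᶜ : Set Θ)) ∈ residual Θ := by
      refine (countable_bInter_mem hatoms).2 fun x hx => ?_
      haveI := hperf x
      exact residual_of_dense_open isOpen_compl_singleton (dense_compl_singleton x)
    refine mem_of_superset this ?_
    intro y hy
    simp only [mem_iInter, mem_compl_iff, mem_singleton_iff] at hy
    by_contra hyS
    have hpos : 0 < μ {y} := pos_iff_ne_zero.mpr hyS
    exact hy y hpos rfl
  -- a countable dense subset of S
  obtain ⟨t, htc, htd⟩ := TopologicalSpace.exists_countable_dense (↥S)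
  have hDd : Dense ((↑) '' t : Set Θ) :=
    hSdense.denseRange_val.dense_image continuous_subtype_val htd
  have hDc : ((↑) '' t : Set Θ).Countable := htc.image _
  have hDne : ((↑) '' t : Set Θ).Nonempty := hDd.nonempty
  obtain ⟨d, hd⟩ := hDc.exists_eq_range hDne
  have hdS : ∀ k, μ {d k} = 0 := by
    intro k
    have : d k ∈ ((↑) '' t : Set Θ) := hd ▸ mem_range_self k
    obtain ⟨⟨x, hx⟩, -, rfl⟩ := this
    exact hx
  have hdr : Dense (Set.range d) := hd ▸ hDd
  -- approximation maps
  have hex : ∀ (n : ℕ) (θ : Θ), ∃ k, dist θ (d k) < 1 / (n + 1) := by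
    intro n θ
    have hpos : (0 : ℝ) < 1 / (n + 1) := by positivity
    obtain ⟨y, hy1, k, rfl⟩ := Metric.dense_iff.mp hdr θ _ hpos
    exact ⟨k, (Metric.mem_ball'.mp hy1)⟩
  set f : ℕ → Θ → Θ := fun n θ => d (Nat.find (hex n θ)) with hf
  have hfm : ∀ n, Measurable (f n) := by
    intro n
    exact (measurable_from_top (f := d)).comp
      (measurable_find _ fun k => measurableSet_lt (measurable_id.dist measurable_const)
        measurable_const)
  have hfd : ∀ n θ, dist θ (f n θ) < 1 / (n + 1) := fun n θ => Nat.find_spec (hex n θ)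
  have hfmem : ∀ n θ, f n θ ∈ Set.range d := fun n θ => mem_range_self _
  have hftendsto : ∀ θ, Tendsto (fun n => f n θ) atTop (𝓝 θ) := by
    intro θ
    rw [tendsto_iff_dist_tendsto_zero]
    exact squeeze_zero (fun n => dist_nonneg) (fun n => dist_comm (f n θ) θ ▸ (hfd n θ).le)
      tendsto_one_div_add_atTop_nhds_zero_nat
  -- the value function
  set D : Set Θ := Set.range d with hDdef
  have hDmeas : MeasurableSet D := (countable_range d).measurableSet
  have hμD : μ D = 0 := by
    have : D ⊆ ⋃ k, {d k} := by intro x ⟨k, hk⟩; exact mem_iUnion.mpr ⟨k, hk.symm ▸ rfl⟩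
    exact measure_mono_null this (measure_iUnion_null fun k => hdS k)
  refine ⟨Dᶜ.indicator 1, (measurable_one.indicator hDmeas.compl), ?_, ?_⟩
  · intro θ
    by_cases h : θ ∈ Dᶜ <;> simp [Set.indicator_apply, h]
  refine ⟨fun n => π₀.map (hfm n).aemeasurable, ?_, ?_, ?_⟩
  · rw [ProbabilityMeasure.tendsto_iff_forall_integral_tendsto]
    intro g
    have key : ∀ n, ∫ θ, g θ ∂((π₀.map (hfm n).aemeasurable : ProbabilityMeasure Θ) : Measure Θ)
        = ∫ θ, g (f n θ) ∂μ := by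
      intro n
      rw [ProbabilityMeasure.toMeasure_map]
      exact integral_map (hfm n).aemeasurable g.continuous.aestronglyMeasurable
    simp only [key]
    refine tendsto_integral_of_dominated_convergence (fun _ => ‖g‖)
      (fun n => (g.continuous.measurable.comp (hfm n)).aestronglyMeasurable)
      (integrable_const _) (fun n => Eventually.of_forall fun θ => g.norm_coe_le_norm _)
      (Eventually.of_forall fun θ => (g.continuous.tendsto θ).comp (hftendsto θ))
  · intro n
    rw [ProbabilityMeasure.toMeasure_map,
      integral_map (hfm n).aemeasurable ((measurable_one.indicator hDmeas.compl)).aestronglyMeasurable]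
    have : (fun θ => Dᶜ.indicator (1 : Θ → ℝ) (f n θ)) = fun _ => (0 : ℝ) := by
      funext θ
      exact Set.indicator_of_notMem (by simpa using hfmem n θ) _
    rw [this, integral_zero]
  · rw [integral_indicator hDmeas.compl]
    have h1 : μ Dᶜ = 1 := by
      rw [measure_compl hDmeas (measure_ne_top _ _), hμD, measure_univ, tsub_zero]
    simp only [Pi.one_apply]
    rw [setIntegral_const, measureReal_def, h1]
    simp
end

section
/- Let Θ be a Polish space, F a nonempty set of bounded measurable functions Θ → ℝ uniformly bounded by M, Π a nonempty set of probability measures, D a jointly convex metric on probability measures, and r > 0. Suppose f̂ ∈ F satisfies inf_{π ∈ N_D(Π,r)} ∫ f̂ dπ ≥ inf_{π ∈ N_D(Π,r)} ∫ f dπ for all f ∈ F (maxmin optimality over the neighborhood N_D(Π,r)). Then there exists λ ≥ 0 such that f̂ maximizes over F the variational objective inf over all probability measures π of [ ∫ f dπ + λ·D(π, Π) ], where D(π,Π) = inf_{π' ∈ Π} D(π,π'). -/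
open MeasureTheory Filter Topology

/-- If `f̂` is maxmin optimal over the radius-`r` `D`-neighborhood of a convex
ambiguity set `P`, then for some multiplier `λ ≥ 0`, `f̂` maximizes over `F` the variational
objective `inf_π [∫ f dπ + λ·D(π, P)]`. -/
theorem stmt19 {Θ : Type*} [TopologicalSpace Θ] [PolishSpace Θ] [MeasurableSpace Θ] [BorelSpace Θ]
    (D : ProbabilityMeasure Θ → ProbabilityMeasure Θ → ℝ)
    (hD0 : ∀ μ ν, 0 ≤ D μ ν) (hDsymm : ∀ μ ν, D μ ν = D ν μ)
    (hDtri : ∀ μ ν ρ, D μ ρ ≤ D μ ν + D ν ρ)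
    (hDeq : ∀ μ ν, D μ ν = 0 ↔ μ = ν)
    (hDconv : ∀ (l : ℝ) (hl0 : 0 ≤ l) (hl1 : l ≤ 1) (μ₁ μ₂ ν₁ ν₂ : ProbabilityMeasure Θ),
      D (mix l hl0 hl1 μ₁ μ₂) (mix l hl0 hl1 ν₁ ν₂) ≤ l * D μ₁ ν₁ + (1 - l) * D μ₂ ν₂)
    (P : Set (ProbabilityMeasure Θ)) (hP : P.Nonempty)
    (hPconv : ∀ (l : ℝ) (hl0 : 0 ≤ l) (hl1 : l ≤ 1), ∀ μ ∈ P, ∀ ν ∈ P,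
      mix l hl0 hl1 μ ν ∈ P)
    (r : ℝ) (hr : 0 < r)
    (F : Set (Θ → ℝ)) (hF : F.Nonempty) (M : ℝ)
    (hFb : ∀ f ∈ F, ∀ θ, |f θ| ≤ M) (hFm : ∀ f ∈ F, Measurable f)
    (fhat : Θ → ℝ) (hfhatF : fhat ∈ F)
    (hopt : ∀ f ∈ F,
      sInf ((fun π : ProbabilityMeasure Θ => ∫ θ, f θ ∂(π : Measure Θ)) '' nbhd D P r)
        ≤ sInf ((fun π : ProbabilityMeasure Θ => ∫ θ, fhat θ ∂(π : Measure Θ)) '' nbhd D P r)) :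
    ∃ lam : ℝ, 0 ≤ lam ∧ ∀ f ∈ F,
      sInf (Set.range (fun π : ProbabilityMeasure Θ =>
          ∫ θ, f θ ∂(π : Measure Θ) + lam * distToSet D π P))
        ≤ sInf (Set.range (fun π : ProbabilityMeasure Θ =>
          ∫ θ, fhat θ ∂(π : Measure Θ) + lam * distToSet D π P)) := by
  classical
  obtain ⟨π₀, hπ₀P⟩ := hP
  set d : ProbabilityMeasure Θ → ℝ := fun π => distToSet D π P with hd_def
  have hbddD : ∀ π : ProbabilityMeasure Θ, BddBelow ((fun π' => D π π') '' P) := by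
    intro π
    exact ⟨0, by rintro b ⟨ρ, hρ, rfl⟩; exact hD0 π ρ⟩
  have hdnn : ∀ π, 0 ≤ d π := by
    intro π
    refine le_csInf ⟨D π π₀, ⟨π₀, hπ₀P, rfl⟩⟩ ?_
    rintro b ⟨ρ, hρ, rfl⟩; exact hD0 π ρ
  have hdP : ∀ π ∈ P, d π = 0 := by
    intro π hπ
    refine le_antisymm ?_ (hdnn π)
    have h : d π ≤ D π π := csInf_le (hbddD π) ⟨π, hπ, rfl⟩
    rwa [(hDeq π π).2 rfl] at h
  -- integrability and bounds
  have hInt : ∀ f ∈ F, ∀ π : ProbabilityMeasure Θ, Integrable f (π : Measure Θ) := by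
    intro f hf π
    refine ⟨(hFm f hf).aestronglyMeasurable, ?_⟩
    refine HasFiniteIntegral.of_bounded (C := M) ?_
    filter_upwards with θ
    simpa [Real.norm_eq_abs] using hFb f hf θ
  have hIb : ∀ f ∈ F, ∀ π : ProbabilityMeasure Θ, |∫ θ, f θ ∂(π : Measure Θ)| ≤ M := by
    intro f hf π
    have h := norm_integral_le_of_norm_le_const (f := f) (μ := (π : Measure Θ)) (C := M)
      (by filter_upwards with θ; simpa [Real.norm_eq_abs] using hFb f hf θ)
    simpa [Real.norm_eq_abs] using h
  -- integral of a mixture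
  have hmixI : ∀ f ∈ F, ∀ (l : ℝ) (h0 : 0 ≤ l) (h1 : l ≤ 1) (μ ν : ProbabilityMeasure Θ),
      ∫ θ, f θ ∂((mix l h0 h1 μ ν : ProbabilityMeasure Θ) : Measure Θ)
        = l * ∫ θ, f θ ∂(μ : Measure Θ) + (1 - l) * ∫ θ, f θ ∂(ν : Measure Θ) := by
    intro f hf l h0 h1 μ ν
    have hco : ((mix l h0 h1 μ ν : ProbabilityMeasure Θ) : Measure Θ)
        = ENNReal.ofReal l • (μ : Measure Θ) + ENNReal.ofReal (1 - l) • (ν : Measure Θ) := rfl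
    rw [hco, integral_add_measure ((hInt f hf μ).smul_measure ENNReal.ofReal_ne_top)
          ((hInt f hf ν).smul_measure ENNReal.ofReal_ne_top),
        integral_smul_measure, integral_smul_measure,
        ENNReal.toReal_ofReal h0, ENNReal.toReal_ofReal (by linarith)]
    simp [smul_eq_mul]
  -- convexity of d
  have hmixd : ∀ (l : ℝ) (h0 : 0 ≤ l) (h1 : l ≤ 1) (μ ν : ProbabilityMeasure Θ),
      d (mix l h0 h1 μ ν) ≤ l * d μ + (1 - l) * d ν := by
    intro l h0 h1 μ ν
    refine le_of_forall_pos_le_add ?_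
    intro ε hε
    obtain ⟨a, ⟨ρ₁, hρ₁, rfl⟩, ha⟩ :
        ∃ a ∈ (fun π' => D μ π') '' P, a < d μ + ε / 2 :=
      exists_lt_of_csInf_lt ⟨_, ⟨π₀, hπ₀P, rfl⟩⟩ (lt_add_of_pos_right _ (by linarith))
    obtain ⟨b, ⟨ρ₂, hρ₂, rfl⟩, hb⟩ :
        ∃ b ∈ (fun π' => D ν π') '' P, b < d ν + ε / 2 :=
      exists_lt_of_csInf_lt ⟨_, ⟨π₀, hπ₀P, rfl⟩⟩ (lt_add_of_pos_right _ (by linarith))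
    have hmem : mix l h0 h1 ρ₁ ρ₂ ∈ P := hPconv l h0 h1 ρ₁ hρ₁ ρ₂ hρ₂
    have h1' : d (mix l h0 h1 μ ν) ≤ D (mix l h0 h1 μ ν) (mix l h0 h1 ρ₁ ρ₂) :=
      csInf_le (hbddD _) ⟨_, hmem, rfl⟩
    have h2' := hDconv l h0 h1 μ ν ρ₁ ρ₂
    nlinarith [mul_le_mul_of_nonneg_left ha.le h0,
      mul_le_mul_of_nonneg_left hb.le (by linarith : (0:ℝ) ≤ 1 - l)]
  -- the value function g
  set g : ℝ → ℝ := fun t =>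
    sInf ((fun π : ProbabilityMeasure Θ => ∫ θ, fhat θ ∂(π : Measure Θ)) '' {π | d π ≤ t})
    with hg_def
  have hSne : ∀ t : ℝ, 0 ≤ t →
      ((fun π : ProbabilityMeasure Θ => ∫ θ, fhat θ ∂(π : Measure Θ)) '' {π | d π ≤ t}).Nonempty := by
    intro t ht
    exact ⟨_, π₀, by simpa [hdP π₀ hπ₀P] using ht, rfl⟩
  have hSbdd : ∀ t : ℝ,
      BddBelow ((fun π : ProbabilityMeasure Θ => ∫ θ, fhat θ ∂(π : Measure Θ)) '' {π | d π ≤ t}) := by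
    intro t
    refine ⟨-M, ?_⟩
    rintro b ⟨π, hπ, rfl⟩
    have := (abs_le.mp (hIb fhat hfhatF π)).1
    linarith
  have hg_le : ∀ t : ℝ, ∀ π : ProbabilityMeasure Θ, d π ≤ t →
      g t ≤ ∫ θ, fhat θ ∂(π : Measure Θ) := by
    intro t π hπ
    exact csInf_le (hSbdd t) ⟨π, hπ, rfl⟩
  have hg_mono : ∀ s t : ℝ, 0 ≤ s → s ≤ t → g t ≤ g s := by
    intro s t hs hst
    refine csInf_le_csInf (hSbdd t) (hSne s hs) ?_
    rintro b ⟨π, hπ, rfl⟩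
    exact ⟨π, le_trans hπ hst, rfl⟩
  -- convexity of g
  have hgconv : ∀ a b l : ℝ, 0 ≤ a → 0 ≤ b → ∀ (h0 : 0 ≤ l) (h1 : l ≤ 1),
      g (l * a + (1 - l) * b) ≤ l * g a + (1 - l) * g b := by
    intro a b l ha hb h0 h1
    refine le_of_forall_pos_le_add ?_
    intro ε hε
    obtain ⟨y, ⟨π₁, hπ₁, rfl⟩, hy⟩ :=
      exists_lt_of_csInf_lt (hSne a ha) (lt_add_of_pos_right (g a) hε)
    obtain ⟨z, ⟨π₂, hπ₂, rfl⟩, hz⟩ :=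
      exists_lt_of_csInf_lt (hSne b hb) (lt_add_of_pos_right (g b) hε)
    have hπ₁' : d π₁ ≤ a := hπ₁
    have hπ₂' : d π₂ ≤ b := hπ₂
    have hm : d (mix l h0 h1 π₁ π₂) ≤ l * a + (1 - l) * b := by
      refine le_trans (hmixd l h0 h1 π₁ π₂) ?_
      nlinarith [mul_le_mul_of_nonneg_left hπ₁' h0,
        mul_le_mul_of_nonneg_left hπ₂' (by linarith : (0:ℝ) ≤ 1 - l)]
    have hle := hg_le (l * a + (1 - l) * b) (mix l h0 h1 π₁ π₂) hm
    rw [hmixI fhat hfhatF l h0 h1 π₁ π₂] at hle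
    nlinarith [mul_le_mul_of_nonneg_left hy.le h0,
      mul_le_mul_of_nonneg_left hz.le (by linarith : (0:ℝ) ≤ 1 - l)]
  -- three-point slope inequality
  have hslope : ∀ a b c : ℝ, 0 ≤ a → a < b → b < c →
      (g b - g c) / (c - b) ≤ (g a - g b) / (b - a) := by
    intro a b c ha hab hbc
    have hca : 0 < c - a := by linarith
    have h0 : 0 ≤ (c - b) / (c - a) := div_nonneg (by linarith) hca.le
    have h1 : (c - b) / (c - a) ≤ 1 := by
      rw [div_le_one hca]; linarith
    have hcomb : (c - b) / (c - a) * a + (1 - (c - b) / (c - a)) * c = b := by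
      field_simp
      ring
    have h := hgconv a c ((c - b) / (c - a)) ha (by linarith) h0 h1
    rw [hcomb] at h
    have h'' : (c - a) * g b ≤ (c - b) * g a + (b - a) * g c := by
      have h2 := mul_le_mul_of_nonneg_left h hca.le
      calc (c - a) * g b ≤ (c - a) * ((c - b) / (c - a) * g a + (1 - (c - b) / (c - a)) * g c) := h2
        _ = (c - b) * g a + (b - a) * g c := by field_simp; ring
    rw [div_le_div_iff₀ (by linarith) (by linarith)]
    nlinarith [h'']
  -- the multiplier
  set S : Set ℝ := (fun t => (g r - g t) / (t - r)) '' Set.Ioi r with hS_def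
  have hSne' : S.Nonempty := ⟨_, 2 * r, Set.mem_Ioi.mpr (by linarith), rfl⟩
  have hSbdd' : BddAbove S := by
    refine ⟨(g (r / 2) - g r) / (r - r / 2), ?_⟩
    rintro b ⟨t, ht, rfl⟩
    exact hslope (r / 2) r t (by linarith) (by linarith) ht
  set lam : ℝ := sSup S with hlam_def
  have hlam0 : 0 ≤ lam := by
    have hmem : (g r - g (2 * r)) / (2 * r - r) ∈ S := ⟨2 * r, Set.mem_Ioi.mpr (by linarith), rfl⟩
    have h := le_csSup hSbdd' hmem
    have hge : 0 ≤ (g r - g (2 * r)) / (2 * r - r) :=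
      div_nonneg (by linarith [hg_mono r (2 * r) hr.le (by linarith)]) (by linarith)
    linarith
  -- subgradient inequality : g r ≤ g t + lam * (t - r) for t ≥ 0
  have hsub : ∀ t : ℝ, 0 ≤ t → g r ≤ g t + lam * (t - r) := by
    intro t ht
    rcases lt_trichotomy t r with hlt | heq | hgt
    · -- lam ≤ (g t - g r)/(r - t)
      have hub : lam ≤ (g t - g r) / (r - t) := by
        refine csSup_le hSne' ?_
        rintro b ⟨t', ht', rfl⟩
        exact hslope t r t' ht hlt ht'
      have hrt : 0 < r - t := by linarith
      have := (le_div_iff₀ hrt).mp hub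
      nlinarith
    · subst heq; simp
    · have hmem : (g r - g t) / (t - r) ∈ S := ⟨t, hgt, rfl⟩
      have h := le_csSup hSbdd' hmem
      have htr : 0 < t - r := by linarith
      have h2 : g r - g t ≤ lam * (t - r) := by
        have h3 := mul_le_mul_of_nonneg_right h htr.le
        rwa [div_mul_cancel₀ _ htr.ne'] at h3
      linarith
  refine ⟨lam, hlam0, ?_⟩
  intro f hf
  -- rewrite nbhd in hopt
  have hopt' : sInf ((fun π : ProbabilityMeasure Θ => ∫ θ, f θ ∂(π : Measure Θ)) '' {π | d π ≤ r})
      ≤ g r := hopt f hf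
  -- lower bound for RHS
  have hRHS : g r + lam * r ≤ sInf (Set.range (fun π : ProbabilityMeasure Θ =>
      ∫ θ, fhat θ ∂(π : Measure Θ) + lam * distToSet D π P)) := by
    refine le_csInf ⟨_, π₀, rfl⟩ ?_
    rintro b ⟨π, rfl⟩
    have h1 := hg_le (d π) π le_rfl
    have h2 := hsub (d π) (hdnn π)
    show g r + lam * r ≤ ∫ θ, fhat θ ∂(π : Measure Θ) + lam * d π
    linarith
  -- upper bound for LHS
  have hNbdd : BddBelow (Set.range (fun π : ProbabilityMeasure Θ =>
      ∫ θ, f θ ∂(π : Measure Θ) + lam * distToSet D π P)) := by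
    refine ⟨-M, ?_⟩
    rintro b ⟨π, rfl⟩
    have h1 := (abs_le.mp (hIb f hf π)).1
    have h2 : 0 ≤ lam * distToSet D π P := mul_nonneg hlam0 (hdnn π)
    show -M ≤ ∫ θ, f θ ∂(π : Measure Θ) + lam * distToSet D π P
    linarith
  have hLHS : sInf (Set.range (fun π : ProbabilityMeasure Θ =>
      ∫ θ, f θ ∂(π : Measure Θ) + lam * distToSet D π P)) ≤ g r + lam * r := by
    have hlb : sInf (Set.range (fun π : ProbabilityMeasure Θ =>
        ∫ θ, f θ ∂(π : Measure Θ) + lam * distToSet D π P)) - lam * r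
        ≤ sInf ((fun π : ProbabilityMeasure Θ => ∫ θ, f θ ∂(π : Measure Θ)) '' {π | d π ≤ r}) := by
      refine le_csInf ⟨_, π₀, by simpa [hdP π₀ hπ₀P] using hr.le, rfl⟩ ?_
      rintro b ⟨π, hπ, rfl⟩
      have h1 : sInf (Set.range (fun π : ProbabilityMeasure Θ =>
          ∫ θ, f θ ∂(π : Measure Θ) + lam * distToSet D π P))
          ≤ ∫ θ, f θ ∂(π : Measure Θ) + lam * distToSet D π P := csInf_le hNbdd ⟨π, rfl⟩
      have h2 : lam * distToSet D π P ≤ lam * r := mul_le_mul_of_nonneg_left hπ hlam0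
      linarith
    linarith
  linarith
end
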